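/- Let 0 ≤ β < 1, δ > 0 and 0 ≤ α < δ/2, and let T > 0. For every nonnegative measurable function f on [0,T], the exponentially weighted L² estimate for the convolution holds: ∫₀^T e^{2αt} ( (Q_{β,δ} * f)(t) )² dt ≤ (Γ(1-β)² / [δ(δ-2α)]^{1-β}) · ∫₀^T e^{2αs} f(s)² ds. -/

import Mathlib

open MeasureTheory Real Set

open scoped ENNReal

/-!
Cauchy–Schwarz against the kernel gives `(Q_{β,δ} * f)(t)² ≤ ‖Q_{β,δ}‖₁ (Q_{β,δ} * f²)(t)`, and
`‖Q_{β,δ}‖₁ = Γ(1-β) / δ^{1-β}`. Since `e^{2αt} Q_{β,δ}(t-s) = e^{2αs} Q_{β,δ-2α}(t-s)`, the weight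
moves onto `f²`; after exchanging the order of integration the remaining integral in `t` is at
most `‖Q_{β,δ-2α}‖₁ = Γ(1-β) / (δ-2α)^{1-β}`.
-/

theorem ENNReal.ofReal_sq_le (x : ℝ) : ENNReal.ofReal x ^ 2 ≤ ENNReal.ofReal (x ^ 2) := by
  rcases le_total 0 x with hx | hx
  · rw [ENNReal.ofReal_pow hx]
  · simp [ENNReal.ofReal_of_nonpos hx]

theorem sq_lintegral_mul_le_lintegral_mul_lintegral_mul_sq {α : Type*} [MeasurableSpace α]
    {μ : Measure α} {K g : α → ℝ≥0∞} (hK : AEMeasurable K μ) (hg : AEMeasurable g μ) :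
    (∫⁻ x, K x * g x ∂μ) ^ 2 ≤ (∫⁻ x, K x ∂μ) * ∫⁻ x, K x * g x ^ 2 ∂μ := by
  have hsplit : ∀ x, K x * g x = K x ^ (2⁻¹ : ℝ) * (K x * g x ^ 2) ^ (2⁻¹ : ℝ) := fun x => by
    rw [ENNReal.mul_rpow_of_nonneg _ _ (by norm_num), ← mul_assoc, ← ENNReal.rpow_add_of_nonneg _ _
      (by norm_num) (by norm_num), ← ENNReal.rpow_natCast, ← ENNReal.rpow_mul]
    norm_num
  have holder := ENNReal.lintegral_mul_norm_pow_le hK (hK.mul (hg.pow_const 2))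
    (by norm_num : (0 : ℝ) ≤ 2⁻¹) (by norm_num : (0 : ℝ) ≤ 2⁻¹) (by norm_num)
  calc (∫⁻ x, K x * g x ∂μ) ^ 2
      ≤ ((∫⁻ x, K x ∂μ) ^ (2⁻¹ : ℝ) * (∫⁻ x, K x * g x ^ 2 ∂μ) ^ (2⁻¹ : ℝ)) ^ 2 := by
        rw [lintegral_congr hsplit]
        gcongr
        exact holder
    _ = (∫⁻ x, K x ∂μ) * ∫⁻ x, K x * g x ^ 2 ∂μ := by
        rw [mul_pow, ← ENNReal.rpow_natCast, ← ENNReal.rpow_natCast, ← ENNReal.rpow_mul,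
          ← ENNReal.rpow_mul]
        norm_num

theorem setLIntegral_comp_sub_right_le (K : ℝ → ℝ≥0∞) {a : ℝ} {A : Set ℝ} (hA : A ⊆ Ici a) :
    ∫⁻ x in A, K (x - a) ≤ ∫⁻ u in Ici 0, K u :=
  calc ∫⁻ x in A, K (x - a)
      ≤ ∫⁻ x in Ici a, K (x - a) := lintegral_mono_set hA
    _ = ∫⁻ x, (Ici 0).indicator K (x - a) := by
        rw [← lintegral_indicator measurableSet_Ici]
        congr 1 with x
        simp [indicator_apply, sub_nonneg]
    _ = ∫⁻ u in Ici 0, K u := by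
        rw [lintegral_sub_right_eq_self, lintegral_indicator measurableSet_Ici]

theorem setLIntegral_comp_sub_left_le (K : ℝ → ℝ≥0∞) {t : ℝ} {A : Set ℝ} (hA : A ⊆ Iic t) :
    ∫⁻ s in A, K (t - s) ≤ ∫⁻ u in Ici 0, K u :=
  calc ∫⁻ s in A, K (t - s)
      ≤ ∫⁻ s in Iic t, K (t - s) := lintegral_mono_set hA
    _ = ∫⁻ s, (Ici 0).indicator K (t - s) := by
        rw [← lintegral_indicator measurableSet_Iic]
        congr 1 with s
        simp [indicator_apply, sub_nonneg]
    _ = ∫⁻ u in Ici 0, K u := by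
        rw [lintegral_sub_left_eq_self, lintegral_indicator measurableSet_Ici]

theorem lintegral_Ioc_lintegral_Ioc_swap {H : ℝ → ℝ → ℝ≥0∞}
    (hH : Measurable (Function.uncurry H)) (a b : ℝ) :
    ∫⁻ t in Ioc a b, ∫⁻ s in Ioc a t, H t s = ∫⁻ s in Ioc a b, ∫⁻ t in Icc s b, H t s := by
  set F : ℝ → ℝ → ℝ≥0∞ := fun t s => if s ≤ t then H t s else 0
  have hF : Measurable (Function.uncurry F) :=
    Measurable.ite (measurableSet_le measurable_snd measurable_fst) hH measurable_const
  calc ∫⁻ t in Ioc a b, ∫⁻ s in Ioc a t, H t s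
      = ∫⁻ t in Ioc a b, ∫⁻ s in Ioc a b, F t s := by
        refine setLIntegral_congr_fun measurableSet_Ioc fun t ht => ?_
        rw [← lintegral_indicator measurableSet_Ioc, ← lintegral_indicator measurableSet_Ioc]
        congr 1 with s
        have htb := ht.2
        simp only [F, indicator_apply, mem_Ioc]
        split_ifs <;> grind
    _ = ∫⁻ s in Ioc a b, ∫⁻ t in Ioc a b, F t s := lintegral_lintegral_swap hF.aemeasurable
    _ = ∫⁻ s in Ioc a b, ∫⁻ t in Icc s b, H t s := by
        refine setLIntegral_congr_fun measurableSet_Ioc fun s hs => ?_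
        rw [← lintegral_indicator measurableSet_Ioc, ← lintegral_indicator measurableSet_Icc]
        congr 1 with t
        have has := hs.1
        simp only [F, indicator_apply, mem_Ioc, mem_Icc]
        split_ifs <;> grind

noncomputable def temperedKernel (β δ u : ℝ) : ℝ≥0∞ :=
  ENNReal.ofReal (u ^ (-β) * exp (-δ * u))

@[fun_prop]
theorem measurable_temperedKernel (β δ : ℝ) : Measurable (temperedKernel β δ) := by
  unfold temperedKernel
  fun_prop

theorem lintegral_temperedKernel_Ici {β δ : ℝ} (hβ : β < 1) (hδ : 0 < δ) :
    ∫⁻ u in Ici 0, temperedKernel β δ u = ENNReal.ofReal (Gamma (1 - β) / δ ^ (1 - β)) := by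
  have hint : IntegrableOn (fun u : ℝ => u ^ (-β) * exp (-(δ * u))) (Ioi 0) := by
    simpa using integrableOn_rpow_mul_exp_neg_mul_rpow (s := -β) (by linarith) zero_lt_one hδ
  have hnonneg : 0 ≤ᵐ[volume.restrict (Ioi 0)] fun u : ℝ => u ^ (-β) * exp (-(δ * u)) := by
    filter_upwards [ae_restrict_mem measurableSet_Ioi] with u hu
    exact mul_nonneg (rpow_nonneg hu.out.le _) (exp_nonneg _)
  have hGamma := integral_rpow_mul_exp_neg_mul_Ioi (a := 1 - β) (by linarith) hδ
  rw [sub_sub_cancel_left] at hGamma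
  simp only [← setLIntegral_congr Ioi_ae_eq_Ici, temperedKernel, neg_mul]
  rw [← ofReal_integral_eq_lintegral_ofReal hint hnonneg, hGamma, div_rpow zero_le_one hδ.le,
    one_rpow, one_div_mul_eq_div]

theorem ofReal_exp_mul_temperedKernel (β δ c t s : ℝ) :
    ENNReal.ofReal (exp (c * t)) * temperedKernel β δ (t - s) =
      ENNReal.ofReal (exp (c * s)) * temperedKernel β (δ - c) (t - s) := by
  simp only [temperedKernel, ← ENNReal.ofReal_mul (exp_nonneg _)]
  congr 1
  rw [mul_left_comm, ← exp_add, mul_left_comm (exp (c * s)), ← exp_add]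
  ring_nf

theorem sq_lintegral_temperedKernel_mul_le {β δ : ℝ} (hβ : β < 1) (hδ : 0 < δ) {g : ℝ → ℝ≥0∞}
    (hg : Measurable g) (a t : ℝ) :
    (∫⁻ s in Ioc a t, temperedKernel β δ (t - s) * g s) ^ 2 ≤
      ENNReal.ofReal (Gamma (1 - β) / δ ^ (1 - β)) *
        ∫⁻ s in Ioc a t, temperedKernel β δ (t - s) * g s ^ 2 := by
  refine (sq_lintegral_mul_le_lintegral_mul_lintegral_mul_sq (by fun_prop) hg.aemeasurable).trans ?_
  gcongr
  exact (setLIntegral_comp_sub_left_le _ fun s hs => hs.2).trans_eq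
    (lintegral_temperedKernel_Ici hβ hδ)

theorem lintegral_exp_mul_sq_temperedKernel_conv_le {β δ c : ℝ} (hβ : β < 1) (hδ : 0 < δ)
    (hc : c < δ) {g : ℝ → ℝ≥0∞} (hg : Measurable g) (a b : ℝ) :
    ∫⁻ t in Ioc a b, ENNReal.ofReal (exp (c * t)) *
        (∫⁻ s in Ioc a t, temperedKernel β δ (t - s) * g s) ^ 2 ≤
      ENNReal.ofReal (Gamma (1 - β) ^ 2 / (δ * (δ - c)) ^ (1 - β)) *
        ∫⁻ s in Ioc a b, ENNReal.ofReal (exp (c * s)) * g s ^ 2 := by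
  set C₁ := ENNReal.ofReal (Gamma (1 - β) / δ ^ (1 - β))
  set C₂ := ENNReal.ofReal (Gamma (1 - β) / (δ - c) ^ (1 - β))
  have hC : ENNReal.ofReal (Gamma (1 - β) ^ 2 / (δ * (δ - c)) ^ (1 - β)) = C₁ * C₂ := by
    have hΓ : 0 ≤ Gamma (1 - β) := Gamma_nonneg_of_nonneg (by linarith)
    rw [← ENNReal.ofReal_mul (by positivity), div_mul_div_comm, sq, mul_rpow hδ.le (by linarith)]
  calc ∫⁻ t in Ioc a b, ENNReal.ofReal (exp (c * t)) *
        (∫⁻ s in Ioc a t, temperedKernel β δ (t - s) * g s) ^ 2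
      ≤ ∫⁻ t in Ioc a b, ENNReal.ofReal (exp (c * t)) *
          (C₁ * ∫⁻ s in Ioc a t, temperedKernel β δ (t - s) * g s ^ 2) := by
        gcongr with t
        exact sq_lintegral_temperedKernel_mul_le hβ hδ hg a t
    _ = C₁ * ∫⁻ t in Ioc a b, ∫⁻ s in Ioc a t,
          ENNReal.ofReal (exp (c * s)) * g s ^ 2 * temperedKernel β (δ - c) (t - s) := by
        rw [← lintegral_const_mul' _ _ ENNReal.ofReal_ne_top]
        refine lintegral_congr fun t => ?_
        rw [mul_left_comm, ← lintegral_const_mul' _ _ ENNReal.ofReal_ne_top]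
        congr 2 with s
        rw [← mul_assoc, ofReal_exp_mul_temperedKernel]
        ring
    _ = C₁ * ∫⁻ s in Ioc a b, ENNReal.ofReal (exp (c * s)) * g s ^ 2 *
          ∫⁻ t in Icc s b, temperedKernel β (δ - c) (t - s) := by
        rw [lintegral_Ioc_lintegral_Ioc_swap (by fun_prop)]
        congr 1
        exact lintegral_congr fun s => lintegral_const_mul _ (by fun_prop)
    _ ≤ C₁ * ∫⁻ s in Ioc a b, ENNReal.ofReal (exp (c * s)) * g s ^ 2 * C₂ := by
        gcongr with s
        exact (setLIntegral_comp_sub_right_le _ fun t ht => ht.1).trans_eq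
          (lintegral_temperedKernel_Ici hβ (sub_pos.2 hc))
    _ = _ := by
        rw [lintegral_mul_const' _ _ ENNReal.ofReal_ne_top, hC]
        ring

theorem weighted_L2_convolution_estimate_general
    (β δ α T : ℝ) (hβ1 : β < 1) (hδ : 0 < δ)
    (hα : α < δ / 2)
    (f : ℝ → ℝ) (hf : Measurable f) :
    ∫⁻ t in Ioc (0:ℝ) T, ENNReal.ofReal (Real.exp (2 * α * t)) *
        (∫⁻ s in Ioc (0:ℝ) t,
          ENNReal.ofReal ((t - s) ^ (-β) * Real.exp (-δ * (t - s))) *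
            ENNReal.ofReal (f s)) ^ 2
      ≤ ENNReal.ofReal ((Real.Gamma (1 - β)) ^ 2 / (δ * (δ - 2 * α)) ^ (1 - β)) *
        ∫⁻ s in Ioc (0:ℝ) T,
          ENNReal.ofReal (Real.exp (2 * α * s)) * ENNReal.ofReal (f s ^ 2) := by
  refine (lintegral_exp_mul_sq_temperedKernel_conv_le hβ1 hδ (by linarith) hf.ennreal_ofReal
    0 T).trans ?_
  gcongr with s
  exact ENNReal.ofReal_sq_le (f s)

/-- Exponentially weighted `L²` estimate for the tempered power-law convolution:
`∫₀^T e^{2αt} ((Q_{β,δ}*f)(t))² dt ≤ (Γ(1-β)²/[δ(δ-2α)]^{1-β}) ∫₀^T e^{2αs} f(s)² ds`,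
stated for nonnegative measurable `f` using Lebesgue (`ℝ≥0∞`-valued) integrals. -/
theorem weighted_L2_convolution_estimate
    (β δ α T : ℝ) (hβ0 : 0 ≤ β) (hβ1 : β < 1) (hδ : 0 < δ)
    (hα0 : 0 ≤ α) (hα : α < δ / 2) (hT : 0 < T)
    (f : ℝ → ℝ) (hf : Measurable f)
    (hf_nonneg : ∀ s ∈ Icc (0:ℝ) T, 0 ≤ f s) :
    ∫⁻ t in Ioc (0:ℝ) T, ENNReal.ofReal (Real.exp (2 * α * t)) *
        (∫⁻ s in Ioc (0:ℝ) t,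
          ENNReal.ofReal ((t - s) ^ (-β) * Real.exp (-δ * (t - s))) *
            ENNReal.ofReal (f s)) ^ 2
      ≤ ENNReal.ofReal ((Real.Gamma (1 - β)) ^ 2 / (δ * (δ - 2 * α)) ^ (1 - β)) *
        ∫⁻ s in Ioc (0:ℝ) T,
          ENNReal.ofReal (Real.exp (2 * α * s)) * ENNReal.ofReal (f s ^ 2) :=
  weighted_L2_convolution_estimate_general β δ α T hβ1 hδ hα f hf
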